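/- arXiv:1805.03948 — 3 statements merged into one kernel-verified Lean document; each statement's English description precedes it below -/
import Mathlib

section
/- Let $X$ be a finite-dimensional real Banach space and let $V:X+iX \to \mathbb{R}$ be a continuous twice differentiable plurisubharmonic function such that $y \mapsto V(x+iy)$ is concave in $y \in X$ for all $x \in X$. Then $t \mapsto V(tx+z)$ is convex in $t \in \mathbb{R}$ for all $x \in X$ and $z \in X+iX$. -/
open Set

variable {X : Type*} [NormedAddCommGroup X] [NormedSpace ℝ X]

/-- Second directional derivative of `V` at `p` in directions `a`, `b`. -/
noncomputable def secondDirDeriv (V : X → ℝ) (p a b : X) : ℝ :=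
  fderiv ℝ (fun y => fderiv ℝ V y a) p b

/-- Multiplication by `i` on the complexification `X + iX ≃ X × X`. -/
def Jmap (p : X × X) : X × X := (-p.2, p.1)

/-!
Along the real direction `(x, 0)`, plurisubharmonicity says that the second derivative of `V`
in direction `(x, 0)` is at least minus the second derivative in direction `i (x, 0) = (0, x)`.
The latter is nonpositive by concavity in the imaginary variable, so the former is nonnegative,
and a `C²` function of one real variable with nonnegative second derivative is convex.
-/

section LineRestriction

variable {E : Type*} [NormedAddCommGroup E] [NormedSpace ℝ E] {V : E → ℝ}

theorem hasDerivAt_comp_line {g : E → ℝ} {z v : E} {t : ℝ}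
    (hg : DifferentiableAt ℝ g (z + t • v)) :
    HasDerivAt (fun s : ℝ => g (z + s • v)) (fderiv ℝ g (z + t • v) v) t := by
  have hline : HasDerivAt (fun s : ℝ => z + s • v) v t := by
    simpa using ((hasDerivAt_id t).smul_const v).const_add z
  exact hg.hasFDerivAt.comp_hasDerivAt t hline

theorem hasDerivAt_fderiv_comp_line (hV : ContDiff ℝ 2 V) (z v : E) (t : ℝ) :
    HasDerivAt (fun s : ℝ => fderiv ℝ V (z + s • v) v) (secondDirDeriv V (z + t • v) v v) t := by
  have hd : Differentiable ℝ (fun p => fderiv ℝ V p v) :=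
    ((hV.fderiv_right (m := 1) le_rfl).clm_apply contDiff_const).differentiable one_ne_zero
  exact hasDerivAt_comp_line (hd _)

theorem secondDirDeriv_nonpos_of_concaveOn_line (hV : ContDiff ℝ 2 V) {p v : E}
    (hconc : ConcaveOn ℝ univ (fun t : ℝ => V (p + t • v))) :
    secondDirDeriv V p v v ≤ 0 := by
  have hd1 (t : ℝ) := hasDerivAt_comp_line (hV.differentiable two_ne_zero (p + t • v))
  have hanti : Antitone (fun t : ℝ => fderiv ℝ V (p + t • v) v) := by
    intro a b hab
    have := hconc.antitoneOn_deriv (fun t _ => (hd1 t).differentiableAt)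
      (mem_univ a) (mem_univ b) hab
    simpa only [(hd1 _).deriv] using this
  simpa using (hasDerivAt_fderiv_comp_line hV p v 0).nonpos_of_antitone hanti

theorem convexOn_line_of_secondDirDeriv_nonneg (hV : ContDiff ℝ 2 V) {z v : E}
    (h : ∀ t : ℝ, 0 ≤ secondDirDeriv V (z + t • v) v v) :
    ConvexOn ℝ univ (fun t : ℝ => V (z + t • v)) :=
  convexOn_of_hasDerivWithinAt2_nonneg convex_univ
    (hV.continuous.comp (by fun_prop)).continuousOn
    (fun t _ => (hasDerivAt_comp_line (hV.differentiable two_ne_zero _)).hasDerivWithinAt)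
    (fun t _ => (hasDerivAt_fderiv_comp_line hV z v t).hasDerivWithinAt) (fun t _ => h t)

end LineRestriction

theorem concaveOn_imaginary_line {V : X × X → ℝ}
    (hconc : ∀ x : X, ConcaveOn ℝ univ (fun y : X => V (x, y))) (p : X × X) (y : X) :
    ConcaveOn ℝ univ (fun t : ℝ => V (p + t • ((0 : X), y))) := by
  have hline : (fun t : ℝ => V (p + t • ((0 : X), y))) =
      (fun y' => V (p.1, y')) ∘ AffineMap.lineMap p.2 (p.2 + y) := by
    funext t
    congr 1
    ext <;> simp [AffineMap.lineMap_apply, add_comm]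
  rw [hline]
  simpa only [preimage_univ] using (hconc p.1).comp_affineMap (AffineMap.lineMap p.2 (p.2 + y))

theorem convex_real_direction_of_plurisubharmonic_concave_imaginary_general
    (V : X × X → ℝ)
    (hV : ContDiff ℝ 2 V)
    (hpsh : ∀ w v : X × X,
      0 ≤ secondDirDeriv V w v v + secondDirDeriv V w (Jmap v) (Jmap v))
    (hconc : ∀ x : X, ConcaveOn ℝ univ (fun y : X => V (x, y))) :
    ∀ (x : X) (z : X × X),
      ConvexOn ℝ univ (fun t : ℝ => V (z + t • ((x, 0) : X × X))) := by
  intro x z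
  refine convexOn_line_of_secondDirDeriv_nonneg hV fun t => ?_
  set p := z + t • ((x, 0) : X × X)
  have hsum := hpsh p (x, 0)
  simp only [Jmap, neg_zero] at hsum
  have himag := secondDirDeriv_nonpos_of_concaveOn_line hV (concaveOn_imaginary_line hconc p x)
  linarith

/-- Let `X` be a finite-dimensional real Banach space and
`V : X + iX → ℝ` a continuous twice differentiable plurisubharmonic function such
that `y ↦ V(x + iy)` is concave for each `x`. Then `t ↦ V(t x + z)` is convex in
`t ∈ ℝ` for every `x ∈ X`, `z ∈ X + iX`. -/
theorem convex_real_direction_of_plurisubharmonic_concave_imaginary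
    [FiniteDimensional ℝ X] (V : X × X → ℝ)
    (hVcont : Continuous V) (hV : ContDiff ℝ 2 V)
    (hpsh : ∀ w v : X × X,
      0 ≤ secondDirDeriv V w v v + secondDirDeriv V w (Jmap v) (Jmap v))
    (hconc : ∀ x : X, ConcaveOn ℝ univ (fun y : X => V (x, y))) :
    ∀ (x : X) (z : X × X),
      ConvexOn ℝ univ (fun t : ℝ => V (z + t • ((x, 0) : X × X))) :=
  convex_real_direction_of_plurisubharmonic_concave_imaginary_general V hV hpsh hconc
end

section
/- Let $H$ be a finite-dimensional Hilbert space, $X$ a finite-dimensional Banach space, and $\phi, \psi \in \mathcal{L}(X^*, H)$ linear operators such that for every $x^* \in X^*$ one has $\|\psi x^*\| \leq \|\phi x^*\|$ and $\langle \psi x^*, \phi x^* \rangle = 0$. Then there exists $A \in \mathcal{L}(H)$ with $\|A\| \leq 1$ such that $\psi = A\phi$ and $P A$ is skew-symmetric, where $P$ is the orthogonal projection onto $\mathrm{Ran}(\phi)$. -/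
/-!
Let `P` be the orthogonal projection onto `Ran φ`, `s` a linear section of `φ` over `Ran φ`,
and `A = ψ ∘ s ∘ P`. Then `A h = ψ x` for some `x` with `φ x = P h`, so
`‖A h‖ ≤ ‖φ x‖ = ‖P h‖ ≤ ‖h‖`; `A φ = ψ` because `ker φ ≤ ker ψ` by domination; and
`⟪P A h, h⟫ = ⟪A h, P h⟫ = ⟪ψ x, φ x⟫ = 0`.
-/

open scoped InnerProductSpace RealInnerProductSpace

namespace LinearMap

theorem ker_le_ker_of_norm_le {R E F G : Type*} [Ring R] [AddCommGroup E] [Module R E]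
    [SeminormedAddCommGroup F] [Module R F] [NormedAddCommGroup G] [Module R G]
    {φ : E →ₗ[R] F} {ψ : E →ₗ[R] G} (hnorm : ∀ x, ‖ψ x‖ ≤ ‖φ x‖) : ker φ ≤ ker ψ := by
  intro x hx
  rw [mem_ker] at hx ⊢
  simpa [hx] using hnorm x

variable {𝕜 E H G : Type*} [RCLike 𝕜] [AddCommGroup E] [Module 𝕜 E]
  [NormedAddCommGroup H] [InnerProductSpace 𝕜 H]

section rangeLift

variable (φ : E →ₗ[𝕜] H) [(range φ).HasOrthogonalProjection]

section

variable [AddCommGroup G] [Module 𝕜 G] (ψ : E →ₗ[𝕜] G)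

noncomputable def rangeLift : H →ₗ[𝕜] G :=
  ψ ∘ₗ (φ.rangeRestrict.exists_rightInverse_of_surjective φ.range_rangeRestrict).choose ∘ₗ
    (range φ).orthogonalProjectionOnto.toLinearMap

theorem exists_rangeLift_apply_eq (h : H) :
    ∃ x, φ x = (range φ).starProjection h ∧ rangeLift φ ψ h = ψ x := by
  have hs := (φ.rangeRestrict.exists_rightInverse_of_surjective φ.range_rangeRestrict).choose_spec
  refine ⟨_, ?_, rfl⟩
  exact congr_arg Subtype.val (LinearMap.congr_fun hs ((range φ).orthogonalProjectionOnto h))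

theorem rangeLift_comp {ψ : E →ₗ[𝕜] G} (hker : ker φ ≤ ker ψ) : rangeLift φ ψ ∘ₗ φ = ψ := by
  ext y
  obtain ⟨x, hφ, hA⟩ := exists_rangeLift_apply_eq φ ψ (φ y)
  rw [(range φ).starProjection_eq_self_iff.mpr (mem_range_self φ y), ← sub_eq_zero,
    ← map_sub, ← mem_ker] at hφ
  simpa [hA, sub_eq_zero] using hker hφ

end

theorem norm_rangeLift_apply_le [NormedAddCommGroup G] [Module 𝕜 G] {ψ : E →ₗ[𝕜] G}
    (hnorm : ∀ x, ‖ψ x‖ ≤ ‖φ x‖) (h : H) : ‖rangeLift φ ψ h‖ ≤ ‖h‖ := by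
  obtain ⟨x, hφ, hA⟩ := exists_rangeLift_apply_eq φ ψ h
  calc ‖rangeLift φ ψ h‖ = ‖ψ x‖ := by rw [hA]
    _ ≤ ‖φ x‖ := hnorm x
    _ = ‖(range φ).starProjection h‖ := by rw [hφ]
    _ ≤ ‖h‖ := (range φ).norm_starProjection_apply_le h

theorem inner_starProjection_rangeLift_apply_self {ψ : E →ₗ[𝕜] H}
    (horth : ∀ x, ⟪ψ x, φ x⟫_𝕜 = 0) (h : H) :
    ⟪(range φ).starProjection (rangeLift φ ψ h), h⟫_𝕜 = 0 := by
  obtain ⟨x, hφ, hA⟩ := exists_rangeLift_apply_eq φ ψ h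
  rw [Submodule.inner_starProjection_left_eq_right, ← hφ, hA, horth]

end rangeLift

end LinearMap

theorem exists_contraction_skew_symmetric_general
    {H X : Type*} [NormedAddCommGroup H] [InnerProductSpace ℝ H]
    [FiniteDimensional ℝ H]
    [NormedAddCommGroup X] [NormedSpace ℝ X]
    (φ ψ : StrongDual ℝ X →L[ℝ] H)
    (hdom : ∀ x : StrongDual ℝ X, ‖ψ x‖ ≤ ‖φ x‖)
    (horth : ∀ x : StrongDual ℝ X, ⟪ψ x, φ x⟫ = 0) :
    ∃ A : H →L[ℝ] H, ‖A‖ ≤ 1 ∧ ψ = A.comp φ ∧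
      ∀ h : H,
        ⟪((Submodule.orthogonalProjectionOnto (LinearMap.range (φ : StrongDual ℝ X →ₗ[ℝ] H)) (A h)) : H), h⟫ = 0 := by
  let A := (LinearMap.rangeLift (φ : StrongDual ℝ X →ₗ[ℝ] H)
    (ψ : StrongDual ℝ X →ₗ[ℝ] H)).toContinuousLinearMap
  refine ⟨A, ?_, ?_, LinearMap.inner_starProjection_rangeLift_apply_self _ horth⟩
  · exact A.opNorm_le_bound zero_le_one fun h ↦
      (one_mul ‖h‖).symm ▸ LinearMap.norm_rangeLift_apply_le _ hdom h
  · exact ContinuousLinearMap.coe_injective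
      (LinearMap.rangeLift_comp _ (LinearMap.ker_le_ker_of_norm_le hdom)).symm

/-- Let `H` be a finite-dimensional Hilbert space, `X` a
finite-dimensional Banach space, and `φ, ψ : X* → H` linear operators such that
`‖ψ x*‖ ≤ ‖φ x*‖` and `⟪ψ x*, φ x*⟫ = 0` for all `x*`. Then there is `A : H → H`
with `‖A‖ ≤ 1`, `ψ = A ∘ φ`, and `P A` skew-symmetric, where `P` is the orthogonal
projection onto `Ran φ`. -/
theorem exists_contraction_skew_symmetric
    {H X : Type*} [NormedAddCommGroup H] [InnerProductSpace ℝ H]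
    [FiniteDimensional ℝ H]
    [NormedAddCommGroup X] [NormedSpace ℝ X] [FiniteDimensional ℝ X]
    (φ ψ : StrongDual ℝ X →L[ℝ] H)
    (hdom : ∀ x : StrongDual ℝ X, ‖ψ x‖ ≤ ‖φ x‖)
    (horth : ∀ x : StrongDual ℝ X, ⟪ψ x, φ x⟫ = 0) :
    ∃ A : H →L[ℝ] H, ‖A‖ ≤ 1 ∧ ψ = A.comp φ ∧
      ∀ h : H,
        ⟪((Submodule.orthogonalProjectionOnto (LinearMap.range (φ : StrongDual ℝ X →ₗ[ℝ] H)) (A h)) : H), h⟫ = 0 :=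
  exists_contraction_skew_symmetric_general φ ψ hdom horth
end

section
/- Let $X$ be a separable Banach space and $\phi: X \to \mathbb{R}_+$ a convex lower semicontinuous function. Then there exists an increasing sequence of finite-dimensional subspaces $(Y_n)_{n\geq 1}$ of $X^*$ such that, setting $\phi_n(\tilde{x}) = \inf\{\phi(x) : x \in X,\ P_n^* x = \tilde{x}\}$ where $P_n: Y_n \hookrightarrow X^*$ is the inclusion, the sequence $(\phi_n(P_n^* x))_{n \geq 1}$ increases to $\phi(x)$ as $n \to \infty$, for each $x \in X$. -/
open Filter
open scoped ENNReal Topology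

variable {X : Type*} [NormedAddCommGroup X] [NormedSpace ℝ X]

/-- The map `P* : X → Y*` induced by a subspace `Y ⊆ X*`. -/
noncomputable def Pstar (Y : Submodule ℝ (StrongDual ℝ X)) (x : X) :
    Y →L[ℝ] ℝ :=
  ((NormedSpace.inclusionInDoubleDual ℝ X) x).comp Y.subtypeL

/-- The induced function `φ_Y(x̃) = inf { φ x : P* x = x̃ }`. -/
noncomputable def phiY (Y : Submodule ℝ (StrongDual ℝ X)) (φ : X → ℝ)
    (t : Y →L[ℝ] ℝ) : ℝ≥0∞ :=
  ⨅ (x : X) (_ : Pstar Y x = t), ENNReal.ofReal (φ x)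

/-- Every point strictly below a convex lsc function admits a continuous affine
minorant separating it. -/
lemma exists_affine_minorant (φ : X → ℝ) (hφ : ConvexOn ℝ Set.univ φ)
    (hlsc : LowerSemicontinuous φ) {x : X} {c : ℝ} (hc : c < φ x) :
    ∃ (g : X →L[ℝ] ℝ) (a : ℝ), (∀ y, g y + a ≤ φ y) ∧ c < g x + a := by
  set C : Set (X × ℝ) := {p | φ p.1 ≤ p.2} with hC
  have hCc : Convex ℝ C := by
    have := hφ.convex_epigraph
    simpa [hC] using this
  have hCcl : IsClosed C := by
    rw [← isOpen_compl_iff, isOpen_iff_mem_nhds]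
    rintro ⟨y, t⟩ ht
    simp only [hC, Set.mem_compl_iff, Set.mem_setOf_eq, not_le] at ht
    have h1 : (t + φ y) / 2 < φ y := by linarith
    have h2 := hlsc y _ h1
    rw [nhds_prod_eq]
    refine Filter.mem_of_superset
      (Filter.prod_mem_prod h2 (Iio_mem_nhds (show t < (t + φ y) / 2 by linarith))) ?_
    rintro ⟨z, s⟩ ⟨hz, hs⟩
    simp only [hC, Set.mem_compl_iff, Set.mem_setOf_eq, not_le]
    exact lt_trans hs hz
  have hx : (x, c) ∉ C := by simp only [hC, Set.mem_setOf_eq]; exact not_le.2 hc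
  obtain ⟨f, u, hfu, hfC⟩ := geometric_hahn_banach_point_closed hCc hCcl hx
  set β := f (0, 1) with hβdef
  have hft : ∀ (y : X) (t : ℝ), f (y, t) = f (y, 0) + t * β := by
    intro y t
    have : (y, t) = (y, (0:ℝ)) + t • ((0:X), (1:ℝ)) := by simp
    rw [this, map_add, map_smul, smul_eq_mul]
  have hβ : 0 < β := by
    rcases lt_trichotomy β 0 with h | h | h
    · exfalso
      set A := f (0, 0) + φ 0 * β with hA
      set s := max 0 ((A - u) / (-β)) with hs
      have hs0 : 0 ≤ s := le_max_left _ _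
      have hmem : ((0:X), φ 0 + s) ∈ C := by
        simp only [hC, Set.mem_setOf_eq]; linarith
      have h1 : u < f (0, 0) + (φ 0 + s) * β := by
        have := hfC _ hmem
        rwa [hft] at this
      have h2 : (A - u) / (-β) ≤ s := le_max_right _ _
      have h3 : (A - u) / (-β) * (-β) = A - u := div_mul_cancel₀ _ (by linarith)
      nlinarith
    · exfalso
      have h1 : u < f (x, φ x) := hfC _ (by simp [hC])
      rw [hft, h, mul_zero, add_zero] at h1
      rw [hft, h, mul_zero, add_zero] at hfu
      linarith
    · exact h
  refine ⟨(-β⁻¹) • (f.comp (ContinuousLinearMap.inl ℝ X ℝ)), u / β, ?_, ?_⟩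
  · intro y
    have h1 : u < f (y, 0) + φ y * β := by
      have := hfC (y, φ y) (by simp [hC])
      rwa [hft] at this
    simp only [ContinuousLinearMap.smul_apply, ContinuousLinearMap.comp_apply,
      ContinuousLinearMap.inl_apply, smul_eq_mul]
    have hβne : β ≠ 0 := ne_of_gt hβ
    rw [show -β⁻¹ * f (y, 0) + u / β = (u - f (y, 0)) / β by field_simp; ring,
      div_le_iff₀ hβ]
    nlinarith
  · have h1 : f (x, c) < u := hfu
    rw [hft] at h1
    simp only [ContinuousLinearMap.smul_apply, ContinuousLinearMap.comp_apply,
      ContinuousLinearMap.inl_apply, smul_eq_mul]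
    have hβne : β ≠ 0 := ne_of_gt hβ
    rw [show -β⁻¹ * f (x, 0) + u / β = (u - f (x, 0)) / β by field_simp; ring,
      lt_div_iff₀ hβ]
    nlinarith


lemma exists_minorant_seq [TopologicalSpace.SeparableSpace X]
    (φ : X → ℝ) (hφ : ConvexOn ℝ Set.univ φ) (hlsc : LowerSemicontinuous φ) :
    ∃ (g : ℕ → X →L[ℝ] ℝ) (a : ℕ → ℝ),
      (∀ n y, (g n) y + a n ≤ φ y) ∧ ∀ x c, c < φ x → ∃ n, c < (g n) x + a n := by
  haveI : SecondCountableTopology X := UniformSpace.secondCountable_of_separable X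
  set ι := {p : (X →L[ℝ] ℝ) × ℝ // ∀ y, p.1 y + p.2 ≤ φ y} with hι
  set s : ι → Set (X × ℝ) := fun i => {q | q.2 < i.1.1 q.1 + i.1.2} with hs
  have hopen : ∀ i, IsOpen (s i) := fun i =>
    isOpen_lt continuous_snd ((i.1.1.continuous.comp continuous_fst).add continuous_const)
  have hU : ⋃ i, s i = {q : X × ℝ | q.2 < φ q.1} := by
    apply Set.Subset.antisymm
    · rintro ⟨y, t⟩ hq
      obtain ⟨i, hi⟩ := Set.mem_iUnion.1 hq
      exact lt_of_lt_of_le hi (i.2 y)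
    · rintro ⟨y, t⟩ hq
      obtain ⟨g, a, hmin, hgt⟩ := exists_affine_minorant φ hφ hlsc hq
      exact Set.mem_iUnion.2 ⟨⟨(g, a), hmin⟩, hgt⟩
  obtain ⟨T, hTc, hTU⟩ := TopologicalSpace.isOpen_iUnion_countable s hopen
  have hmem : ((0 : X), φ 0 - 1) ∈ ⋃ i ∈ T, s i := by
    rw [hTU, hU]; simp only [Set.mem_setOf_eq]; linarith
  have hTne : T.Nonempty := by
    obtain ⟨i, hi, -⟩ := Set.mem_iUnion₂.1 hmem
    exact ⟨i, hi⟩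
  obtain ⟨e, he⟩ := hTc.exists_eq_range hTne
  refine ⟨fun n => (e n).1.1, fun n => (e n).1.2, fun n => (e n).2, ?_⟩
  intro x c hc
  have hm : (x, c) ∈ ⋃ i ∈ T, s i := by rw [hTU, hU]; exact hc
  rw [he, Set.biUnion_range] at hm
  obtain ⟨n, hn⟩ := Set.mem_iUnion.1 hm
  exact ⟨n, hn⟩

/-- Let `X` be a separable Banach space and `φ : X → ℝ₊` convex
lower semicontinuous. Then there is an increasing sequence of finite-dimensional
subspaces `Yₙ ⊆ X*` such that `φₙ(Pₙ* x)` increases to `φ x` for every `x`. -/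
theorem exists_finiteDimensional_subspaces_phiY_tendsto
    [CompleteSpace X] [TopologicalSpace.SeparableSpace X]
    (φ : X → ℝ) (hφ0 : ∀ x, 0 ≤ φ x) (hφ : ConvexOn ℝ Set.univ φ)
    (hlsc : LowerSemicontinuous φ) :
    ∃ Y : ℕ → Submodule ℝ (StrongDual ℝ X),
      (∀ n, FiniteDimensional ℝ (Y n)) ∧ Monotone Y ∧
      ∀ x : X,
        Monotone (fun n => phiY (Y n) φ (Pstar (Y n) x)) ∧
        Tendsto (fun n => phiY (Y n) φ (Pstar (Y n) x)) atTop
          (𝓝 (ENNReal.ofReal (φ x))) := by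
  obtain ⟨g, a, hmin, hsep⟩ := exists_minorant_seq φ hφ hlsc
  set Y : ℕ → Submodule ℝ (StrongDual ℝ X) :=
    fun n => Submodule.span ℝ (g '' Set.Iic n) with hY
  have hYfin : ∀ n, FiniteDimensional ℝ (Y n) := fun n =>
    FiniteDimensional.span_of_finite ℝ ((Set.finite_Iic n).image g)
  have hYmono : Monotone Y := fun m n h =>
    Submodule.span_mono (Set.image_mono (Set.Iic_subset_Iic.2 h))
  have happ : ∀ (W : Submodule ℝ (StrongDual ℝ X)) (z : X) (y : StrongDual ℝ X)
      (hy : y ∈ W), Pstar W z ⟨y, hy⟩ = y z := by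
    intro W z y hy
    simp [Pstar, NormedSpace.dual_def]
  have hkey : ∀ n (x z : X), Pstar (Y n) z = Pstar (Y n) x → ∀ i ≤ n, g i z = g i x := by
    intro n x z h i hi
    have hmem : g i ∈ Y n := Submodule.subset_span ⟨i, hi, rfl⟩
    have := DFunLike.congr_fun h ⟨g i, hmem⟩
    rwa [happ, happ] at this
  have hub : ∀ n x, phiY (Y n) φ (Pstar (Y n) x) ≤ ENNReal.ofReal (φ x) := fun n x => by
    simp only [phiY]; exact iInf_le_of_le x (iInf_le _ rfl)
  have hlb : ∀ n x i, i ≤ n →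
      ENNReal.ofReal (g i x + a i) ≤ phiY (Y n) φ (Pstar (Y n) x) := by
    intro n x i hi
    simp only [phiY]
    refine le_iInf₂ fun z hz => ENNReal.ofReal_le_ofReal ?_
    have hgz : g i z = g i x := hkey n x z hz i hi
    have := hmin i z
    rwa [hgz] at this
  have hmono : ∀ x, Monotone fun n => phiY (Y n) φ (Pstar (Y n) x) := by
    intro x m n hmn
    simp only [phiY]
    refine le_iInf₂ fun z hz => ?_
    have hz' : Pstar (Y m) z = Pstar (Y m) x := by
      ext ⟨y, hy⟩
      have := DFunLike.congr_fun hz ⟨y, hYmono hmn hy⟩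
      rw [happ, happ] at this
      rw [happ, happ]
      exact this
    exact iInf₂_le z hz'
  refine ⟨Y, hYfin, hYmono, fun x => ⟨hmono x, ?_⟩⟩
  have h1 : Tendsto (fun n => phiY (Y n) φ (Pstar (Y n) x)) atTop
      (𝓝 (⨆ n, phiY (Y n) φ (Pstar (Y n) x))) := tendsto_atTop_iSup (hmono x)
  have h2 : (⨆ n, phiY (Y n) φ (Pstar (Y n) x)) = ENNReal.ofReal (φ x) := by
    refine le_antisymm (iSup_le fun n => hub n x) (le_of_forall_lt fun c hc => ?_)
    have hct : c ≠ ⊤ := ne_top_of_lt hc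
    have h3 : c.toReal < φ x := (ENNReal.lt_ofReal_iff_toReal_lt hct).1 hc
    obtain ⟨n, hn⟩ := hsep x c.toReal h3
    calc c = ENNReal.ofReal c.toReal := (ENNReal.ofReal_toReal hct).symm
      _ < ENNReal.ofReal (g n x + a n) :=
          (ENNReal.ofReal_lt_ofReal_iff (lt_of_le_of_lt ENNReal.toReal_nonneg hn)).2 hn
      _ ≤ phiY (Y n) φ (Pstar (Y n) x) := hlb n x n le_rfl
      _ ≤ ⨆ n, phiY (Y n) φ (Pstar (Y n) x) := le_iSup (fun n => phiY (Y n) φ (Pstar (Y n) x)) n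
  rwa [h2] at h1
end
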